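/- Let {J'^a_n} be a level-k representation of affine sl(2) on W. Let {J^a_n} be a level-k representation on V possessing a vector v₀ with J^a_n v₀ = 0 for all n ≥ 0 and a ∈ {0,+,−}, and such that V is freely generated from v₀ by the negative modes: there exists an enumeration X₁, X₂, X₃, … of the family {J^a_{−n} : a ∈ {0,+,−}, n ≥ 1} such that the vectors X_{i₁} X_{i₂} ⋯ X_{i_r} v₀, over all finite non-increasing index sequences i₁ ≥ ⋯ ≥ i_r (r ≥ 0), form a basis of V (V is the vacuum module D^k₀). Then the map β ↦ (w ↦ β(v₀ ⊗ w)) is a linear isomorphism from the space of two-point conformal blocks for (V, W) onto the space { ψ ∈ W* : ψ ∘ J'^a_{−m} = 0 for all a ∈ {0,+,−} and all m ≥ 0 }, i.e. onto the one-point conformal block space of W on ℂP¹; the vacuum insertion can be removed. -/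

import Mathlib

/-!
Level-`k` representations of affine `sl(2)`.

A level-`k` representation of affine `sl(2)` on a complex vector space `V` is a
family of linear endomorphisms `J⁰_n, J⁺_n, J⁻_n` (`n ∈ ℤ`) satisfying
`[J⁺_m, J⁻_n] = J⁰_{m+n} + k·m·δ_{m+n,0}·id`, `[J⁰_m, J^±_n] = ±2 J^±_{m+n}`,
`[J⁰_m, J⁰_n] = 2k·m·δ_{m+n,0}·id`, `[J⁺_m, J⁺_n] = [J⁻_m, J⁻_n] = 0`.

For `s ∈ ℤ`, the spectral flow `ϑ_s` replaces `J^±_n` by `J^±_{n∓s}` and `J⁰_n` by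
`J⁰_n − s·k·δ_{n,0}·id`.
-/

noncomputable section

/-- a family of operators `J⁰_n, J⁺_n, J⁻_n` (`n ∈ ℤ`) on `V` -/
structure AffineFamily (V : Type*) [AddCommGroup V] [Module ℂ V] where
  Jz : ℤ → Module.End ℂ V
  Jp : ℤ → Module.End ℂ V
  Jm : ℤ → Module.End ℂ V

variable {V W : Type*}

/-- the commutation relations making an `AffineFamily` a level-`k` representation of
affine `sl(2)` -/
def IsLevelRep [AddCommGroup V] [Module ℂ V] (k : ℂ) (ρ : AffineFamily V) : Prop :=
  (∀ m n : ℤ, ρ.Jp m * ρ.Jm n - ρ.Jm n * ρ.Jp m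
      = ρ.Jz (m + n) + (if m + n = 0 then k * (m : ℂ) else 0) • 1) ∧
  (∀ m n : ℤ, ρ.Jz m * ρ.Jp n - ρ.Jp n * ρ.Jz m = (2 : ℂ) • ρ.Jp (m + n)) ∧
  (∀ m n : ℤ, ρ.Jz m * ρ.Jm n - ρ.Jm n * ρ.Jz m = (-2 : ℂ) • ρ.Jm (m + n)) ∧
  (∀ m n : ℤ, ρ.Jz m * ρ.Jz n - ρ.Jz n * ρ.Jz m
      = (if m + n = 0 then 2 * k * (m : ℂ) else 0) • 1) ∧
  (∀ m n : ℤ, ρ.Jp m * ρ.Jp n = ρ.Jp n * ρ.Jp m) ∧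
  (∀ m n : ℤ, ρ.Jm m * ρ.Jm n = ρ.Jm n * ρ.Jm m)

/-- the spectral flow `ϑ_s` of a level-`k` family:
`J^±_n ↦ J^±_{n∓s}`, `J⁰_n ↦ J⁰_n − s·k·δ_{n,0}·id` -/
def flow [AddCommGroup V] [Module ℂ V] (k : ℂ) (s : ℤ) (ρ : AffineFamily V) :
    AffineFamily V where
  Jz n := ρ.Jz n - (if n = 0 then (s : ℂ) * k else 0) • 1
  Jp n := ρ.Jp (n - s)
  Jm n := ρ.Jm (n + s)

open TensorProduct

/-- the negative-mode operators `{J^a_{−n} : a ∈ {0,+,−}, n ≥ 1}` of a family,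
labelled by `Fin 3 × ℕ` (the label `(a, n)` corresponds to the mode `−(n+1)`) -/
def negMode [AddCommGroup V] [Module ℂ V] (ρ : AffineFamily V) (p : Fin 3 × ℕ) :
    Module.End ℂ V :=
  if p.1 = 0 then ρ.Jz (-((p.2 : ℤ) + 1))
  else if p.1 = 1 then ρ.Jp (-((p.2 : ℤ) + 1))
  else ρ.Jm (-((p.2 : ℤ) + 1))


/-!
A two-point block `β` is the same as the map `curry β : V → W*`, and the block condition says
exactly that it intertwines `J^a_n` on `V` with the contragredient action `-(J'^a_{-n})ᵀ` on
`W*`, which is again a level-`k` representation. The theorem is therefore the universal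
property of the vacuum module. An intertwiner `F` is determined by `F v₀`, since `V` is spanned
by negative-mode monomials applied to `v₀`, and `F v₀` is killed by the non-negative modes
because `v₀` is. Conversely, given such a `ψ`, define `F` on the basis by
`F (X_{i₁} ⋯ X_{i_r} v₀) = X'_{i₁} ⋯ X'_{i_r} ψ`. Straightening an arbitrary word with the
commutation relations of the negative modes (which carry no central term) shows that this
formula holds for every word, so `F` commutes with the negative modes; commutation with all
other modes follows by induction on the word from the full commutation relations, which are
the same on both sides because both representations have level `k`.
-/

namespace AffineFamily

variable [AddCommGroup V] [Module ℂ V]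

def mode (ρ : AffineFamily V) : Fin 3 → ℤ → Module.End ℂ V := ![ρ.Jz, ρ.Jp, ρ.Jm]

theorem negMode_eq_mode (ρ : AffineFamily V) (p : Fin 3 × ℕ) :
    negMode ρ p = ρ.mode p.1 (-((p.2 : ℤ) + 1)) := by
  obtain ⟨a, n⟩ := p
  fin_cases a <;> rfl

end AffineFamily

open AffineFamily

/-- Structure constants of affine `sl(2)` in the labels `0 ↦ J⁰, 1 ↦ J⁺, 2 ↦ J⁻`:
`[J^a_m, J^b_n] = lieCoeff a b • J^(lieLabel a b)_(m+n) + δ_{m+n,0} · invariantForm a b · k · m`.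
The entries of `lieLabel` where `lieCoeff` vanishes are arbitrary. -/
def lieCoeff : Fin 3 → Fin 3 → ℂ := ![![0, 2, -2], ![-2, 0, 1], ![2, -1, 0]]

def lieLabel : Fin 3 → Fin 3 → Fin 3 := ![![0, 1, 2], ![1, 1, 0], ![2, 0, 2]]

def invariantForm : Fin 3 → Fin 3 → ℂ := ![![2, 0, 0], ![0, 0, 1], ![0, 1, 0]]

section LevelRep

variable [AddCommGroup V] [Module ℂ V] {k : ℂ} {ρ : AffineFamily V}

theorem isLevelRep_iff_mode_commutator :
    IsLevelRep k ρ ↔ ∀ (a b : Fin 3) (m n : ℤ),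
      ρ.mode a m * ρ.mode b n - ρ.mode b n * ρ.mode a m
        = lieCoeff a b • ρ.mode (lieLabel a b) (m + n)
          + (if m + n = 0 then invariantForm a b * k * m else 0) • 1 := by
  constructor
  · rintro ⟨hpm, hzp, hzm, hzz, hpp, hmm⟩ a b m n
    fin_cases a <;> fin_cases b <;>
      simp only [mode, lieCoeff, lieLabel, invariantForm, Fin.zero_eta, Fin.mk_one, Fin.reduceFinMk,
        Fin.isValue, Matrix.cons_val', Matrix.cons_val_fin_one, Matrix.cons_val_zero,
        Matrix.cons_val_one, Matrix.cons_val, zero_smul, one_smul, neg_smul, ite_smul, ite_self,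
        zero_add, add_zero, zero_mul, one_mul]
    · have h := hzz m n
      split_ifs at h ⊢ <;> linear_combination (norm := module) h
    · exact hzp m n
    · linear_combination (norm := module) hzm m n
    · have h := hzp n m
      rw [add_comm n m] at h
      linear_combination (norm := module) -h
    · linear_combination (norm := module) hpp m n
    · have h := hpm m n
      split_ifs at h ⊢ <;> linear_combination (norm := module) h
    · have h := hzm n m
      rw [add_comm n m] at h
      linear_combination (norm := module) -h
    · have h := hpm n m
      rw [add_comm n m] at h
      split_ifs at h ⊢ with hmn
      · obtain rfl : n = -m := by omega
        push_cast at h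
        linear_combination (norm := module) -h
      · linear_combination (norm := module) -h
    · linear_combination (norm := module) hmm m n
  · intro h
    refine ⟨fun m n => ?_, fun m n => ?_, fun m n => ?_, fun m n => ?_, fun m n => ?_,
      fun m n => ?_⟩
    · simpa [mode, lieCoeff, lieLabel, invariantForm] using h 1 2 m n
    · simpa [mode, lieCoeff, lieLabel, invariantForm] using h 0 1 m n
    · simpa [mode, lieCoeff, lieLabel, invariantForm] using h 0 2 m n
    · simpa [mode, lieCoeff, lieLabel, invariantForm] using h 0 0 m n
    · simpa [mode, lieCoeff, lieLabel, invariantForm, sub_eq_zero] using h 1 1 m n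
    · simpa [mode, lieCoeff, lieLabel, invariantForm, sub_eq_zero] using h 2 2 m n

theorem IsLevelRep.mode_mul (hρ : IsLevelRep k ρ) (a b : Fin 3) (m n : ℤ) :
    ρ.mode a m * ρ.mode b n = ρ.mode b n * ρ.mode a m
      + lieCoeff a b • ρ.mode (lieLabel a b) (m + n)
      + (if m + n = 0 then invariantForm a b * k * m else 0) • 1 := by
  rw [add_assoc, ← sub_eq_iff_eq_add']
  exact isLevelRep_iff_mode_commutator.mp hρ a b m n

theorem IsLevelRep.negMode_mul (hρ : IsLevelRep k ρ) (p q : Fin 3 × ℕ) :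
    negMode ρ p * negMode ρ q = negMode ρ q * negMode ρ p
      + lieCoeff p.1 q.1 • negMode ρ (lieLabel p.1 q.1, p.2 + q.2 + 1) := by
  have hsum : -((p.2 : ℤ) + 1) + -((q.2 : ℤ) + 1) = -(((p.2 + q.2 + 1 : ℕ) : ℤ) + 1) := by
    push_cast; ring
  rw [negMode_eq_mode, negMode_eq_mode, negMode_eq_mode, hρ.mode_mul, hsum,
    if_neg (by omega), zero_smul, add_zero]

end LevelRep

/-- The contragredient `σ_n = -(J'_{-n})ᵀ` on `W*` of a family `J'` on `W`: a functional `β` on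
`V ⊗ W` is a two-point conformal block exactly when `curry β : V → W*` intertwines the family on
`V` with `σ`. -/
def dualFamily [AddCommGroup W] [Module ℂ W] (ρ : AffineFamily W) :
    AffineFamily (W →ₗ[ℂ] ℂ) where
  Jz n := -Module.Dual.transpose (ρ.Jz (-n))
  Jp n := -Module.Dual.transpose (ρ.Jp (-n))
  Jm n := -Module.Dual.transpose (ρ.Jm (-n))

section Dual

variable [AddCommGroup W] [Module ℂ W] {k : ℂ} {ρ : AffineFamily W}

open Module.Dual

theorem mode_dualFamily (a : Fin 3) (n : ℤ) :
    (dualFamily ρ).mode a n = -transpose (ρ.mode a (-n)) := by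
  fin_cases a <;> rfl

theorem IsLevelRep.dualFamily (hρ : IsLevelRep k ρ) : IsLevelRep k (dualFamily ρ) := by
  rw [isLevelRep_iff_mode_commutator] at hρ ⊢
  intro a b m n
  ext φ w
  have h := congrArg φ (LinearMap.congr_fun (hρ a b (-m) (-n)) w)
  simp only [← neg_add, neg_eq_zero] at h
  split_ifs at h ⊢ <;>
    simp only [mode_dualFamily, transpose_apply, LinearMap.sub_apply, LinearMap.add_apply,
      LinearMap.smul_apply, LinearMap.neg_apply, LinearMap.coe_comp,
      Function.comp_apply, Module.End.mul_apply, Module.End.one_apply, map_sub, map_add, map_neg,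
      map_smul, smul_eq_mul, smul_neg, neg_smul, neg_neg, neg_add_rev, mul_neg, Int.cast_neg,
      zero_smul, add_zero] at h ⊢ <;>
    linear_combination -h

end Dual

theorem sum_map_sum_tails_swap_lt (u : List ℕ) {i j : ℕ} (w : List ℕ) (hij : i < j) :
    ((u ++ j :: i :: w).tails.map List.sum).sum
      < ((u ++ i :: j :: w).tails.map List.sum).sum := by
  induction u with
  | nil =>
    simp only [List.nil_append, List.tails, List.map_cons, List.sum_cons]
    omega
  | cons a u ih =>
    simp only [List.cons_append, List.tails, List.map_cons, List.sum_cons, List.sum_append]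
    omega

theorem exists_eq_append_cons_cons_lt_of_not_isChain {l : List ℕ} (hl : ¬ l.IsChain (· ≥ ·)) :
    ∃ u i j w, l = u ++ i :: j :: w ∧ i < j := by
  simp only [List.isChain_iff_forall_rel_of_append_cons_cons, not_forall] at hl
  obtain ⟨i, j, u, w, hl, hij⟩ := hl
  exact ⟨u, i, j, w, hl, by omega⟩

theorem straightening_induction {P : List ℕ → Prop}
    (sorted : ∀ l, l.IsChain (· ≥ ·) → P l)
    (swap : ∀ u i j w, i < j → P (u ++ j :: i :: w) → (∀ c, P (u ++ c :: w)) →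
      P (u ++ i :: j :: w))
    (l : List ℕ) : P l := by
  by_cases hl : l.IsChain (· ≥ ·)
  · exact sorted l hl
  obtain ⟨u, i, j, w, rfl, hij⟩ := exists_eq_append_cons_cons_lt_of_not_isChain hl
  exact swap u i j w hij (straightening_induction sorted swap _)
    fun c => straightening_induction sorted swap (u ++ c :: w)
-- The sum of suffix sums is `∑ (i + 1) • l[i]`: swapping an ascent lowers it, fusing two
-- letters shortens the word.
termination_by (l.length, (l.tails.map List.sum).sum)
decreasing_by
  all_goals subst_vars
  · exact Prod.Lex.right' _ (by simp) (sum_map_sum_tails_swap_lt u w hij)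
  · exact Prod.Lex.left _ _ (by simp)

def negMonomial [AddCommGroup V] [Module ℂ V] (ρ : AffineFamily V) (e : ℕ ≃ Fin 3 × ℕ)
    (w : List ℕ) : Module.End ℂ V :=
  (w.map fun i => negMode ρ (e i)).prod

section VacuumModule

variable {M : Type*} [AddCommGroup V] [Module ℂ V] [AddCommGroup M] [Module ℂ M] {k : ℂ}
  {ρ : AffineFamily V} {σ : AffineFamily M} {e : ℕ ≃ Fin 3 × ℕ}

@[simp]
theorem negMonomial_nil : negMonomial ρ e [] = 1 :=
  rfl

theorem negMonomial_cons (i : ℕ) (w : List ℕ) :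
    negMonomial ρ e (i :: w) = negMode ρ (e i) * negMonomial ρ e w := by
  simp [negMonomial]

theorem negMonomial_append (u w : List ℕ) :
    negMonomial ρ e (u ++ w) = negMonomial ρ e u * negMonomial ρ e w := by
  simp [negMonomial]

theorem IsLevelRep.negMonomial_swap (hρ : IsLevelRep k ρ) (u : List ℕ) (i j : ℕ)
    (w : List ℕ) :
    negMonomial ρ e (u ++ i :: j :: w) = negMonomial ρ e (u ++ j :: i :: w)
      + lieCoeff (e i).1 (e j).1 • negMonomial ρ e
          (u ++ e.symm (lieLabel (e i).1 (e j).1, (e i).2 + (e j).2 + 1) :: w) := by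
  simp only [negMonomial_append, negMonomial_cons, e.apply_symm_apply]
  rw [← mul_assoc (negMode ρ (e i)), hρ.negMode_mul]
  noncomm_ring

def IsIntertwiner (ρ : AffineFamily V) (σ : AffineFamily M) (F : V →ₗ[ℂ] M) : Prop :=
  ∀ a n, F ∘ₗ ρ.mode a n = σ.mode a n ∘ₗ F

def IsVacuum (ρ : AffineFamily V) (v : V) : Prop :=
  ∀ a n, 0 ≤ n → ρ.mode a n v = 0

theorem IsIntertwiner.isVacuum_apply {F : V →ₗ[ℂ] M} (hF : IsIntertwiner ρ σ F) {v : V}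
    (hv : IsVacuum ρ v) : IsVacuum σ (F v) := by
  intro a n hn
  rw [← LinearMap.comp_apply, ← hF, LinearMap.comp_apply, hv a n hn, map_zero]

theorem IsIntertwiner.map_negMode {F : V →ₗ[ℂ] M} (hF : IsIntertwiner ρ σ F)
    (p : Fin 3 × ℕ) (x : V) : F (negMode ρ p x) = negMode σ p (F x) := by
  rw [negMode_eq_mode, negMode_eq_mode, ← LinearMap.comp_apply, hF, LinearMap.comp_apply]

theorem map_negMonomial {F : V →ₗ[ℂ] M}
    (hF : ∀ p x, F (negMode ρ p x) = negMode σ p (F x)) (w : List ℕ) (x : V) :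
    F (negMonomial ρ e w x) = negMonomial σ e w (F x) := by
  induction w with
  | nil => rfl
  | cons i w ih => rw [negMonomial_cons, negMonomial_cons, Module.End.mul_apply,
      Module.End.mul_apply, hF, ih]

variable {v₀ : V} {b : Module.Basis {l : List ℕ // l.IsChain (· ≥ ·)} ℂ V}

theorem IsIntertwiner.eq_of_apply_eq (hb : ∀ l, b l = negMonomial ρ e l.1 v₀) {F G : V →ₗ[ℂ] M}
    (hF : IsIntertwiner ρ σ F) (hG : IsIntertwiner ρ σ G) (h : F v₀ = G v₀) : F = G :=
  b.ext fun l => by rw [hb, map_negMonomial hF.map_negMode, map_negMonomial hG.map_negMode, h]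

theorem constr_negMonomial (hρ : IsLevelRep k ρ) (hσ : IsLevelRep k σ)
    (hb : ∀ l, b l = negMonomial ρ e l.1 v₀) (ψ : M) (w : List ℕ) :
    b.constr ℂ (fun l => negMonomial σ e l.1 ψ) (negMonomial ρ e w v₀) = negMonomial σ e w ψ := by
  induction w using straightening_induction with
  | sorted l hl => rw [← hb ⟨l, hl⟩, Module.Basis.constr_basis]
  | swap u i j w _ h_swapped h_fused =>
    rw [hρ.negMonomial_swap, hσ.negMonomial_swap, LinearMap.add_apply, LinearMap.add_apply,
      LinearMap.smul_apply, LinearMap.smul_apply, map_add, map_smul, h_swapped, h_fused]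

theorem map_negMode_of_map_negMonomial (hb : ∀ l, b l = negMonomial ρ e l.1 v₀) {ψ : M}
    {F : V →ₗ[ℂ] M} (hF : ∀ w, F (negMonomial ρ e w v₀) = negMonomial σ e w ψ)
    (p : Fin 3 × ℕ) (x : V) : F (negMode ρ p x) = negMode σ p (F x) := by
  have h : ∀ w, negMode ρ p (negMonomial ρ e w v₀) = negMonomial ρ e (e.symm p :: w) v₀ := by
    simp [negMonomial_cons]
  suffices F ∘ₗ negMode ρ p = negMode σ p ∘ₗ F from LinearMap.congr_fun this x
  refine b.ext fun l => ?_
  rw [LinearMap.comp_apply, LinearMap.comp_apply, hb, h, hF, hF, negMonomial_cons,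
    e.apply_symm_apply, Module.End.mul_apply]

theorem isIntertwiner_of_map_negMonomial (hρ : IsLevelRep k ρ) (hσ : IsLevelRep k σ)
    (hb : ∀ l, b l = negMonomial ρ e l.1 v₀) (hv : IsVacuum ρ v₀) {ψ : M} (hψ : IsVacuum σ ψ)
    {F : V →ₗ[ℂ] M} (hF : ∀ w, F (negMonomial ρ e w v₀) = negMonomial σ e w ψ) :
    IsIntertwiner ρ σ F := by
  have hneg := map_negMode_of_map_negMonomial hb hF
  have key : ∀ w a n, F (ρ.mode a n (negMonomial ρ e w v₀)) = σ.mode a n (negMonomial σ e w ψ) := by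
    intro w
    induction w with
    | nil =>
      intro a n
      rcases le_or_gt 0 n with hn | hn
      · simp [hv a n hn, hψ a n hn]
      · obtain ⟨m, rfl⟩ : ∃ m : ℕ, n = -((m : ℤ) + 1) := ⟨(-n - 1).toNat, by omega⟩
        have h0 := hF []
        simp only [negMonomial_nil, Module.End.one_apply] at h0 ⊢
        rw [← negMode_eq_mode ρ (a, m), ← negMode_eq_mode σ (a, m), hneg, h0]
    | cons i w ih =>
      intro a n
      simp only [negMonomial_cons, Module.End.mul_apply, negMode_eq_mode]
      rw [← Module.End.mul_apply, hρ.mode_mul, ← Module.End.mul_apply (σ.mode a n), hσ.mode_mul]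
      simp only [LinearMap.add_apply, LinearMap.smul_apply, Module.End.mul_apply,
        Module.End.one_apply, map_add, map_smul]
      rw [← negMode_eq_mode, ← negMode_eq_mode, hneg, ih, ih, hF]
  intro a n
  refine b.ext fun l => ?_
  rw [LinearMap.comp_apply, LinearMap.comp_apply, hb, key, hF]

theorem bijOn_apply_vacuum (hρ : IsLevelRep k ρ) (hσ : IsLevelRep k σ)
    (hb : ∀ l, b l = negMonomial ρ e l.1 v₀) (hv : IsVacuum ρ v₀) :
    Set.BijOn (fun F : V →ₗ[ℂ] M => F v₀) {F | IsIntertwiner ρ σ F} {ψ | IsVacuum σ ψ} := by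
  refine ⟨fun F hF => hF.isVacuum_apply hv, fun F hF G hG h => hF.eq_of_apply_eq hb hG h,
    fun ψ hψ => ?_⟩
  have hF := constr_negMonomial hρ hσ hb ψ
  refine ⟨_, isIntertwiner_of_map_negMonomial hρ hσ hb hv hψ hF, ?_⟩
  simpa using hF []

end VacuumModule

theorem comp_map_add_map_eq_zero_iff {R M N : Type*} [CommRing R] [AddCommGroup M]
    [Module R M] [AddCommGroup N] [Module R N]
    (β : M ⊗[R] N →ₗ[R] R) (A : Module.End R M) (B : Module.End R N) :
    β ∘ₗ (map A LinearMap.id + map LinearMap.id B) = 0 ↔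
      curry β ∘ₗ A = -Module.Dual.transpose B ∘ₗ curry β := by
  rw [← curry_injective.eq_iff]
  simp [LinearMap.ext_iff, Module.Dual.transpose_apply, add_eq_zero_iff_eq_neg]

section ConformalBlock

variable {M : Type*} [AddCommGroup V] [Module ℂ V] [AddCommGroup W] [Module ℂ W]
  [AddCommGroup M] [Module ℂ M]

theorem isVacuum_iff (ρ : AffineFamily V) (v : V) :
    IsVacuum ρ v ↔ ∀ n : ℤ, 0 ≤ n → ρ.Jz n v = 0 ∧ ρ.Jp n v = 0 ∧ ρ.Jm n v = 0 := by
  simp [IsVacuum, Fin.forall_fin_succ, mode, imp_and, forall_and]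

theorem isIntertwiner_iff (ρ : AffineFamily V) (σ : AffineFamily M) (F : V →ₗ[ℂ] M) :
    IsIntertwiner ρ σ F ↔ ∀ n : ℤ, F ∘ₗ ρ.Jz n = σ.Jz n ∘ₗ F ∧ F ∘ₗ ρ.Jp n = σ.Jp n ∘ₗ F ∧
      F ∘ₗ ρ.Jm n = σ.Jm n ∘ₗ F := by
  simp [IsIntertwiner, Fin.forall_fin_succ, mode, forall_and]

theorem isIntertwiner_curry_iff (ρ : AffineFamily V) (ρ' : AffineFamily W)
    (β : V ⊗[ℂ] W →ₗ[ℂ] ℂ) :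
    IsIntertwiner ρ (dualFamily ρ') (curry β) ↔ ∀ n : ℤ,
      β ∘ₗ (map (ρ.Jz n) LinearMap.id + map LinearMap.id (ρ'.Jz (-n))) = 0 ∧
      β ∘ₗ (map (ρ.Jp n) LinearMap.id + map LinearMap.id (ρ'.Jp (-n))) = 0 ∧
      β ∘ₗ (map (ρ.Jm n) LinearMap.id + map LinearMap.id (ρ'.Jm (-n))) = 0 := by
  simp only [isIntertwiner_iff, comp_map_add_map_eq_zero_iff]
  rfl

theorem isVacuum_dualFamily_iff (ρ : AffineFamily W) (ψ : W →ₗ[ℂ] ℂ) :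
    IsVacuum (dualFamily ρ) ψ ↔ ∀ m : ℤ, 0 ≤ m →
      ψ ∘ₗ ρ.Jz (-m) = 0 ∧ ψ ∘ₗ ρ.Jp (-m) = 0 ∧ ψ ∘ₗ ρ.Jm (-m) = 0 := by
  simp only [isVacuum_iff, dualFamily, LinearMap.neg_apply, neg_eq_zero,
    Module.Dual.transpose_apply]

end ConformalBlock

/-- **removal of a vacuum insertion.**  Let `{J'^a_n}` on `W` be a
level-`k` representation.  Let `{J^a_n}` on `V` be a level-`k` representation with a
vector `v₀` annihilated by all modes `J^a_n`, `n ≥ 0`, and such that `V` is freely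
generated from `v₀` by the negative modes: for some enumeration `X₁, X₂, …` of
`{J^a_{−n} : n ≥ 1}` (via a bijection `e`), the vectors `X_{i₁}⋯X_{i_r} v₀` over all
non-increasing index sequences form a basis of `V` (so `V` is the vacuum module
`D^k₀`).  Then `β ↦ (w ↦ β(v₀ ⊗ w))` is a linear isomorphism from the space of
two-point conformal blocks for `(V, W)` onto the one-point conformal block space
`{ψ ∈ W* : ψ ∘ J'^a_{−m} = 0 for all a and all m ≥ 0}`. -/
theorem statement16 (k : ℂ) [AddCommGroup V] [Module ℂ V] [AddCommGroup W] [Module ℂ W]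
    (ρ : AffineFamily V) (hρ : IsLevelRep k ρ)
    (ρ' : AffineFamily W) (hρ' : IsLevelRep k ρ')
    (v₀ : V)
    (hv : ∀ n : ℤ, 0 ≤ n → ρ.Jz n v₀ = 0 ∧ ρ.Jp n v₀ = 0 ∧ ρ.Jm n v₀ = 0)
    (e : ℕ ≃ Fin 3 × ℕ)
    (b : Module.Basis {l : List ℕ // l.Chain' (· ≥ ·)} ℂ V)
    (hb : ∀ l : {l : List ℕ // l.Chain' (· ≥ ·)},
      b l = ((l.val.map fun i => negMode ρ (e i)).prod) v₀) :
    Set.BijOn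
      (fun β : (V ⊗[ℂ] W) →ₗ[ℂ] ℂ => β ∘ₗ TensorProduct.mk ℂ V W v₀)
      {β : (V ⊗[ℂ] W) →ₗ[ℂ] ℂ | ∀ n : ℤ,
        β ∘ₗ (TensorProduct.map (ρ.Jz n) LinearMap.id
            + TensorProduct.map LinearMap.id (ρ'.Jz (-n))) = 0 ∧
        β ∘ₗ (TensorProduct.map (ρ.Jp n) LinearMap.id
            + TensorProduct.map LinearMap.id (ρ'.Jp (-n))) = 0 ∧
        β ∘ₗ (TensorProduct.map (ρ.Jm n) LinearMap.id
            + TensorProduct.map LinearMap.id (ρ'.Jm (-n))) = 0}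
      {ψ : W →ₗ[ℂ] ℂ | ∀ m : ℤ, 0 ≤ m →
        ψ ∘ₗ ρ'.Jz (-m) = 0 ∧ ψ ∘ₗ ρ'.Jp (-m) = 0 ∧ ψ ∘ₗ ρ'.Jm (-m) = 0} := by
  have hblocks := (bijOn_apply_vacuum hρ hρ'.dualFamily hb ((isVacuum_iff ρ v₀).mpr hv)).comp
    ((lift.equiv (RingHom.id ℂ) V W ℂ).symm.toEquiv.bijOn (isIntertwiner_curry_iff ρ ρ'))
  simp only [isVacuum_dualFamily_iff] at hblocks
  exact hblocks
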